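/- Let f ∈ L_p[0,1] (1 ≤ p < ∞) be self-similar of zero spectral order with d_{k̂} > 1 and a_{k̂}·d_{k̂}^p < 1, and singular point x̂ = α_{k̂}/(1−a_{k̂}). If all the numbers β_{k̂}/(d_{k̂}−1) + β_j for j ≠ k̂ are strictly positive (respectively, all strictly negative), then f tends essentially to +∞ (respectively, to −∞) at x̂: for every M > 0 there is δ > 0 such that f(x) > M (respectively, f(x) < −M) for almost every x ∈ [0,1] with 0 < |x − x̂| < δ. -/

import Mathlib

open MeasureTheory Set Filter
open scoped ENNReal NNReal

/-- Breakpoints: `alphaOf a k = α_k = ∑_{i=1}^{k-1} a_i`, so `α_1 = 0`. -/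
noncomputable def alphaOf (a : ℕ → ℝ) (k : ℕ) : ℝ := ∑ i ∈ Finset.Ico 1 k, a i

/-- The similarity operator `G`: on `(α_k, α_{k+1})` it takes the value
`β_k + d_k · f((x − α_k)/a_k)`, and `0` outside `⋃ (α_k, α_{k+1})`. -/
noncomputable def simOp (n : ℕ) (a d β : ℕ → ℝ) (f : ℝ → ℝ) : ℝ → ℝ :=
  fun x => ∑ k ∈ Finset.Icc 1 n,
    Set.indicator (Set.Ioo (alphaOf a k) (alphaOf a (k + 1)))
      (fun y => β k + d k * f ((y - alphaOf a k) / a k)) x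

/-!
Let `ψ x = (x - α_k̂) / a_k̂` be the inverse of the affine contraction of `[0,1]` onto the
`k̂`-th piece; its fixed point is `x̂`. For `j ≠ k̂` we have `d_j = 0`, so `f = β_j` on the
`j`-th piece, and on the `k̂`-th piece `f x = β_k̂ + d_k̂ f (ψ x)`. By induction on `m`,
`f = d_k̂ ^ m (C + β_j) - C` with `C = β_k̂ / (d_k̂ - 1)` almost everywhere on the points that
`ψ^m` sends into the `j`-th piece. A point `x ≠ x̂` of `[0,1]` close to `x̂` stays in `[0,1]`
under many iterates of `ψ` but eventually leaves it, since `ψ` expands distances to `x̂`; at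
the last level `m` where `ψ^m x ∈ [0,1]`, the point `ψ^m x` lies, up to the null set of
breakpoints, in a piece `j ≠ k̂`. As `d_k̂ > 1`, the values on level `m` tend to `+∞`
uniformly in `j` when all `C + β_j` are positive; the `-∞` case is the same for `-f`, which is
self-similar with parameters `-β`.
-/

open Topology

theorem Nat.exists_mem_Ico_and_not_succ {P : ℕ → Prop} {a b : ℕ} (hab : a ≤ b) (ha : P a)
    (hb : ¬P b) : ∃ j ∈ Ico a b, P j ∧ ¬P (j + 1) := by
  induction b, hab using Nat.le_induction with
  | base => exact absurd ha hb
  | succ b hab ih =>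
    by_cases h : P b
    · exact ⟨b, ⟨hab, b.lt_succ_self⟩, h, hb⟩
    · obtain ⟨j, hj, hPj, hPj'⟩ := ih h
      exact ⟨j, ⟨hj.1, hj.2.trans b.lt_succ_self⟩, hPj, hPj'⟩

theorem mem_of_iterate_apply_mem {α : Type*} {g : α → α} {s : Set α}
    (h : ∀ x, g x ∈ s → x ∈ s) (m : ℕ) {x : α} (hx : g^[m] x ∈ s) : x ∈ s := by
  by_contra hxs
  exact (MapsTo.iterate (fun y hy hgy => hy (h y hgy) : MapsTo g sᶜ sᶜ) m) hxs hx

theorem eventually_add_sub_div_mem_Icc {a b c r : ℝ} (hc : c ∈ Icc a b) (hr : 0 < r) :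
    ∀ᶠ x in 𝓝 c, x ∈ Icc a b → c + (x - c) / r ∈ Icc a b := by
  have hcont : Tendsto (fun x => c + (x - c) / r) (𝓝 c) (𝓝 c) := by
    simpa using (show Continuous fun x => c + (x - c) / r by fun_prop).tendsto c
  have hlow : ∀ᶠ x in 𝓝 c, a ≤ x → a ≤ c + (x - c) / r := by
    rcases hc.1.eq_or_lt with rfl | hac
    · exact Eventually.of_forall fun x hx =>
        le_add_of_nonneg_right (div_nonneg (by linarith) hr.le)
    · exact (hcont.eventually (lt_mem_nhds hac)).mono fun x hx _ => hx.le
  have hupp : ∀ᶠ x in 𝓝 c, x ≤ b → c + (x - c) / r ≤ b := by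
    rcases hc.2.eq_or_lt with rfl | hcb
    · exact Eventually.of_forall fun x hx =>
        add_le_of_nonpos_right (div_nonpos_of_nonpos_of_nonneg (by linarith) hr.le)
    · exact (hcont.eventually (gt_mem_nhds hcb)).mono fun x hx _ => hx.le
  filter_upwards [hlow, hupp] with x hlow hupp hx using ⟨hlow hx.1, hupp hx.2⟩

section Rescaling

variable {c A : ℝ}

theorem iterate_sub_div_apply (hA0 : A ≠ 0) (hA1 : A ≠ 1) (m : ℕ) (x : ℝ) :
    (fun y => (y - c) / A)^[m] x = c / (1 - A) + (x - c / (1 - A)) / A ^ m := by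
  have h1A : 1 - A ≠ 0 := sub_ne_zero.2 (Ne.symm hA1)
  induction m generalizing x with
  | zero => simp
  | succ m ih =>
    rw [Function.iterate_succ_apply, ih]
    field_simp
    ring

theorem sub_div_mem_Ioo_iff (hA : 0 < A) {x : ℝ} :
    (x - c) / A ∈ Ioo 0 1 ↔ x ∈ Ioo c (c + A) := by
  simp only [mem_Ioo, lt_div_iff₀ hA, div_lt_iff₀ hA]
  constructor <;> rintro ⟨h1, h2⟩ <;> constructor <;> linarith

theorem quasiMeasurePreserving_sub_div (hA : A ≠ 0) :
    Measure.QuasiMeasurePreserving (fun y => (y - c) / A) volume volume := by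
  simpa [Function.comp_def, div_eq_inv_mul] using
    (Measure.quasiMeasurePreserving_smul volume (inv_ne_zero hA)).comp
      (measurePreserving_sub_right volume c).quasiMeasurePreserving

theorem div_one_sub_mem_Icc (hc : 0 ≤ c) (hcA : c + A ≤ 1) (hA : A < 1) :
    c / (1 - A) ∈ Icc 0 1 :=
  ⟨div_nonneg hc (by linarith), (div_le_one (by linarith)).2 (by linarith)⟩

theorem exists_iterate_sub_div_mem_Icc_not_mem_succ (hc : 0 ≤ c) (hcA : c + A ≤ 1)
    (hA0 : 0 < A) (hA1 : A < 1) (m₀ : ℕ) :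
    ∃ δ > 0, ∀ x ∈ Icc (0 : ℝ) 1, 0 < |x - c / (1 - A)| → |x - c / (1 - A)| < δ →
      ∃ m ≥ m₀, (fun y => (y - c) / A)^[m] x ∈ Icc 0 1 ∧
        (fun y => (y - c) / A)^[m + 1] x ∉ Icc 0 1 := by
  set xh := c / (1 - A)
  have hxh := div_one_sub_mem_Icc hc hcA hA1
  simp only [iterate_sub_div_apply hA0.ne' hA1.ne]
  obtain ⟨δ, hδ, hnear⟩ :=
    Metric.eventually_nhds_iff.1 (eventually_add_sub_div_mem_Icc hxh (pow_pos hA0 m₀))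
  refine ⟨δ, hδ, fun x hx hne hlt => ?_⟩
  have hescape : ∀ᶠ m in atTop, xh + (x - xh) / A ^ m ∉ Icc 0 1 := by
    filter_upwards [(tendsto_pow_atTop_nhds_zero_of_lt_one hA0.le hA1).eventually
      (gt_mem_nhds hne)] with m hm hmem
    have h1 : 1 < |(x - xh) / A ^ m| := by
      rw [abs_div, abs_of_pos (pow_pos hA0 m)]
      exact (one_lt_div (pow_pos hA0 m)).2 hm
    have h2 : |(x - xh) / A ^ m| ≤ 1 :=
      abs_le.2 ⟨by linarith [hmem.1, hxh.2], by linarith [hmem.2, hxh.1]⟩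
    linarith
  obtain ⟨b, hb, hbout⟩ := ((eventually_ge_atTop m₀).and hescape).exists
  obtain ⟨m, hm, hin, hout⟩ := Nat.exists_mem_Ico_and_not_succ
    (P := fun m => xh + (x - xh) / A ^ m ∈ Icc 0 1) hb (hnear (by rwa [Real.dist_eq]) hx) hbout
  exact ⟨m, hm.1, hin, hout⟩

end Rescaling

section SelfSimilar

variable {n : ℕ} {a : ℕ → ℝ}

theorem alphaOf_zero (a : ℕ → ℝ) : alphaOf a 0 = 0 := by simp [alphaOf]

theorem alphaOf_succ (a : ℕ → ℝ) {k : ℕ} (hk : 1 ≤ k) :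
    alphaOf a (k + 1) = alphaOf a k + a k :=
  Finset.sum_Ico_succ_top hk a

theorem alphaOf_eq_one (hsum : ∑ k ∈ Finset.Icc 1 n, a k = 1) : alphaOf a (n + 1) = 1 := by
  rw [alphaOf, Finset.Ico_add_one_right_eq_Icc, hsum]

theorem alphaOf_le_alphaOf (ha : ∀ k ∈ Finset.Icc 1 n, 0 ≤ a k) {i k : ℕ} (hik : i ≤ k)
    (hk : k ≤ n + 1) : alphaOf a i ≤ alphaOf a k :=
  Finset.sum_le_sum_of_subset_of_nonneg (Finset.Ico_subset_Ico_right hik) fun j hj _ =>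
    ha j (by simp only [Finset.mem_Ico, Finset.mem_Icc] at hj ⊢; omega)

theorem Ioo_alphaOf_subset_Ioo (ha : ∀ k ∈ Finset.Icc 1 n, 0 ≤ a k)
    (hsum : ∑ k ∈ Finset.Icc 1 n, a k = 1) {k : ℕ} (hk : k ∈ Finset.Icc 1 n) :
    Ioo (alphaOf a k) (alphaOf a (k + 1)) ⊆ Ioo 0 1 := by
  rw [Finset.mem_Icc] at hk
  rw [← alphaOf_zero a, ← alphaOf_eq_one hsum]
  exact Ioo_subset_Ioo (alphaOf_le_alphaOf ha (Nat.zero_le k) (by omega))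
    (alphaOf_le_alphaOf ha (by omega) le_rfl)

theorem mem_Ioo_alphaOf_iff {k : ℕ} (hk : 1 ≤ k) (hak : 0 < a k) {x : ℝ} :
    x ∈ Ioo (alphaOf a k) (alphaOf a (k + 1)) ↔ (x - alphaOf a k) / a k ∈ Ioo 0 1 := by
  rw [alphaOf_succ a hk, sub_div_mem_Ioo_iff hak]

theorem simOp_apply_of_mem_Ioo (ha : ∀ k ∈ Finset.Icc 1 n, 0 ≤ a k) (d β : ℕ → ℝ)
    (f : ℝ → ℝ) {k : ℕ} (hk : k ∈ Finset.Icc 1 n) {x : ℝ}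
    (hx : x ∈ Ioo (alphaOf a k) (alphaOf a (k + 1))) :
    simOp n a d β f x = β k + d k * f ((x - alphaOf a k) / a k) := by
  rw [simOp, Finset.sum_eq_single_of_mem k hk, indicator_of_mem hx]
  intro j hj hjk
  refine indicator_of_notMem (fun hxj => ?_) _
  rw [Finset.mem_Icc] at hj hk
  rcases hjk.lt_or_gt with h | h
  · linarith [hxj.2, hx.1, alphaOf_le_alphaOf ha (show j + 1 ≤ k by omega) (by omega)]
  · linarith [hxj.1, hx.2, alphaOf_le_alphaOf ha (show k + 1 ≤ j by omega) (by omega)]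

theorem simOp_neg (d β : ℕ → ℝ) (f : ℝ → ℝ) :
    simOp n a d (-β) (-f) = -simOp n a d β f := by
  funext x
  simp only [simOp, Pi.neg_apply, ← Finset.sum_neg_distrib]
  refine Finset.sum_congr rfl fun k _ => ?_
  simp only [indicator_apply]
  split_ifs <;> ring

variable {d β : ℕ → ℝ} {f : ℝ → ℝ}

theorem ae_eq_on_Ioo_alphaOf (ha : ∀ k ∈ Finset.Icc 1 n, 0 ≤ a k)
    (hsum : ∑ k ∈ Finset.Icc 1 n, a k = 1)
    (hfix : f =ᵐ[volume.restrict (Icc (0 : ℝ) 1)] simOp n a d β f) {k : ℕ}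
    (hk : k ∈ Finset.Icc 1 n) :
    ∀ᵐ x, x ∈ Ioo (alphaOf a k) (alphaOf a (k + 1)) →
      f x = β k + d k * f ((x - alphaOf a k) / a k) := by
  filter_upwards [(ae_restrict_iff' measurableSet_Icc).1 hfix] with x hx hmem
  rw [hx (Ioo_subset_Icc_self (Ioo_alphaOf_subset_Ioo ha hsum hk hmem)),
    simOp_apply_of_mem_Ioo ha d β f hk hmem]

theorem exists_mem_Ioo_alphaOf (hsum : ∑ k ∈ Finset.Icc 1 n, a k = 1) {y : ℝ}
    (hy : y ∈ Icc 0 1) (hbreak : ∀ j, y ≠ alphaOf a j) :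
    ∃ j ∈ Finset.Icc 1 n, y ∈ Ioo (alphaOf a j) (alphaOf a (j + 1)) := by
  have h1 : alphaOf a 1 ≤ y := by simpa [alphaOf] using hy.1
  have hn1 : ¬alphaOf a (n + 1) ≤ y := by
    rw [alphaOf_eq_one hsum]
    exact fun h => hbreak (n + 1) (by rw [alphaOf_eq_one hsum]; exact le_antisymm hy.2 h)
  obtain ⟨j, hj, hjy, hyj⟩ :=
    Nat.exists_mem_Ico_and_not_succ (P := fun j => alphaOf a j ≤ y) (by omega) h1 hn1
  exact ⟨j, Finset.mem_Icc.2 ⟨hj.1, Nat.lt_succ_iff.1 hj.2⟩,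
    lt_of_le_of_ne hjy (hbreak j).symm, not_le.1 hyj⟩

variable {khat : ℕ}

theorem ae_eq_of_iterate_mem_Ioo_alphaOf (ha : ∀ k ∈ Finset.Icc 1 n, 0 < a k)
    (hsum : ∑ k ∈ Finset.Icc 1 n, a k = 1) (hk : khat ∈ Finset.Icc 1 n)
    (hd0 : ∀ k ∈ Finset.Icc 1 n, k ≠ khat → d k = 0)
    (hfix : f =ᵐ[volume.restrict (Icc (0 : ℝ) 1)] simOp n a d β f) (hd1 : d khat ≠ 1)
    (m : ℕ) {j : ℕ} (hj : j ∈ (Finset.Icc 1 n).erase khat) :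
    ∀ᵐ x, (fun y => (y - alphaOf a khat) / a khat)^[m] x ∈
        Ioo (alphaOf a j) (alphaOf a (j + 1)) →
      f x = d khat ^ m * (β khat / (d khat - 1) + β j) - β khat / (d khat - 1) := by
  obtain ⟨hjk, hj⟩ := Finset.mem_erase.1 hj
  have ha' k hk := (ha k hk).le
  have hA := ha khat hk
  have hψ : ∀ y, (y - alphaOf a khat) / a khat ∈ Ioo 0 1 → y ∈ Ioo 0 1 := fun y hy =>
    Ioo_alphaOf_subset_Ioo ha' hsum hk ((mem_Ioo_alphaOf_iff (Finset.mem_Icc.1 hk).1 hA).2 hy)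
  induction m with
  | zero =>
    filter_upwards [ae_eq_on_Ioo_alphaOf ha' hsum hfix hj] with x hx hmem
    rw [hx hmem, hd0 j hj hjk]
    ring
  | succ m ih =>
    filter_upwards [(quasiMeasurePreserving_sub_div hA.ne').ae ih,
      ae_eq_on_Ioo_alphaOf ha' hsum hfix hk] with x hψx hx hmem
    rw [Function.iterate_succ_apply] at hmem
    have hxk : x ∈ Ioo (alphaOf a khat) (alphaOf a (khat + 1)) :=
      (mem_Ioo_alphaOf_iff (Finset.mem_Icc.1 hk).1 hA).2
        (mem_of_iterate_apply_mem hψ m (Ioo_alphaOf_subset_Ioo ha' hsum hj hmem))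
    rw [hx hxk, hψx hmem]
    field_simp [sub_ne_zero.2 hd1]
    ring

theorem selfSimilar_exists_ae_gt_near_singular (ha : ∀ k ∈ Finset.Icc 1 n, 0 < a k)
    (hsum : ∑ k ∈ Finset.Icc 1 n, a k = 1) (hk : khat ∈ Finset.Icc 1 n)
    (hd0 : ∀ k ∈ Finset.Icc 1 n, k ≠ khat → d k = 0)
    (hfix : f =ᵐ[volume.restrict (Icc (0 : ℝ) 1)] simOp n a d β f) (hdgt : 1 < d khat)
    (hA1 : a khat < 1)
    (hpos : ∀ j ∈ Finset.Icc 1 n, j ≠ khat → 0 < β khat / (d khat - 1) + β j)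
    (M : ℝ) :
    ∃ δ > 0, ∀ᵐ x ∂(volume.restrict (Icc (0 : ℝ) 1)),
      (0 < |x - alphaOf a khat / (1 - a khat)| ∧ |x - alphaOf a khat / (1 - a khat)| < δ) →
        M < f x := by
  set C := β khat / (d khat - 1)
  have hk1 := Finset.mem_Icc.1 hk
  have ha' k hk := (ha k hk).le
  have hA0 : 0 < a khat := ha khat hk
  have hc : 0 ≤ alphaOf a khat :=
    alphaOf_zero a ▸ alphaOf_le_alphaOf ha' (Nat.zero_le _) (by omega)
  have hcA : alphaOf a khat + a khat ≤ 1 := by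
    rw [← alphaOf_succ a hk1.1, ← alphaOf_eq_one hsum]
    exact alphaOf_le_alphaOf ha' (by omega) le_rfl
  obtain ⟨m₀, hm₀⟩ : ∃ m₀, ∀ m ≥ m₀, ∀ j ∈ (Finset.Icc 1 n).erase khat,
      M < d khat ^ m * (C + β j) - C := by
    refine eventually_atTop.1 ((eventually_all_finset _).2 fun j hj => ?_)
    obtain ⟨hjk, hj⟩ := Finset.mem_erase.1 hj
    have hlim := tendsto_atTop_add_const_right _ (-C)
      ((tendsto_pow_atTop_atTop_of_one_lt hdgt).atTop_mul_const (hpos j hj hjk))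
    simpa only [sub_eq_add_neg] using hlim.eventually_gt_atTop M
  obtain ⟨δ, hδ, hexit⟩ := exists_iterate_sub_div_mem_Icc_not_mem_succ hc hcA hA0 hA1 m₀
  refine ⟨δ, hδ, ?_⟩
  have hval := ae_all_iff.2 fun m => (eventually_all_finset _).2 fun j hj =>
    ae_eq_of_iterate_mem_Ioo_alphaOf ha hsum hk hd0 hfix hdgt.ne' m hj
  have hbreak : ∀ᵐ x, ∀ m j, (fun y => (y - alphaOf a khat) / a khat)^[m] x ≠ alphaOf a j :=
    ae_all_iff.2 fun m => ae_all_iff.2 fun j =>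
      ((quasiMeasurePreserving_sub_div hA0.ne').iterate m).ae (volume.ae_ne _)
  rw [ae_restrict_iff' measurableSet_Icc]
  filter_upwards [hval, hbreak] with x hval hbreak hx ⟨hne, hlt⟩
  obtain ⟨m, hm, hin, hout⟩ := hexit x hx hne hlt
  obtain ⟨j, hj, hmem⟩ := exists_mem_Ioo_alphaOf hsum hin (hbreak m)
  have hjk : j ≠ khat := by
    rintro rfl
    rw [mem_Ioo_alphaOf_iff hk1.1 hA0] at hmem
    exact hout (Function.iterate_succ_apply' _ _ _ ▸ Ioo_subset_Icc_self hmem)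
  have hj' := Finset.mem_erase.2 ⟨hjk, hj⟩
  rw [hval m j hj' hmem]
  exact hm₀ m hm j hj'

end SelfSimilar

theorem selfSimilar_zeroOrder_essTendsTo_pm_infty_general
    (n : ℕ) (a d β : ℕ → ℝ)
    (ha : ∀ k ∈ Finset.Icc 1 n, 0 < a k)
    (hsum : ∑ k ∈ Finset.Icc 1 n, a k = 1)
    (p : ℝ≥0∞)
    (khat : ℕ) (hk : khat ∈ Finset.Icc 1 n)
    (hd0 : ∀ k ∈ Finset.Icc 1 n, k ≠ khat → d k = 0)
    (f : ℝ → ℝ)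
    (hfix : f =ᵐ[volume.restrict (Set.Icc (0:ℝ) 1)] simOp n a d β f)
    (hdgt : d khat > 1) (hcontr' : a khat * d khat ^ p.toReal < 1)
    (xhat : ℝ) (hxhat : xhat = alphaOf a khat / (1 - a khat)) :
    ((∀ j ∈ Finset.Icc 1 n, j ≠ khat → 0 < β khat / (d khat - 1) + β j) →
      ∀ M > (0:ℝ), ∃ δ > (0:ℝ), ∀ᵐ x ∂(volume.restrict (Set.Icc (0:ℝ) 1)),
        (0 < |x - xhat| ∧ |x - xhat| < δ) → f x > M) ∧
    ((∀ j ∈ Finset.Icc 1 n, j ≠ khat → β khat / (d khat - 1) + β j < 0) →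
      ∀ M > (0:ℝ), ∃ δ > (0:ℝ), ∀ᵐ x ∂(volume.restrict (Set.Icc (0:ℝ) 1)),
        (0 < |x - xhat| ∧ |x - xhat| < δ) → f x < -M) := by
  subst hxhat
  have hA1 : a khat < 1 := by
    have := Real.one_le_rpow hdgt.le (ENNReal.toReal_nonneg (a := p))
    nlinarith [ha khat hk]
  refine ⟨fun hpos M _ =>
    selfSimilar_exists_ae_gt_near_singular ha hsum hk hd0 hfix hdgt hA1 hpos M,
    fun hneg M _ => ?_⟩
  have hfix' : -f =ᵐ[volume.restrict (Icc (0 : ℝ) 1)] simOp n a d (-β) (-f) := by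
    rw [simOp_neg]
    exact hfix.neg
  obtain ⟨δ, hδ, h⟩ := selfSimilar_exists_ae_gt_near_singular ha hsum hk hd0 hfix' hdgt hA1
    (fun j hj hjk => by simp only [Pi.neg_apply, neg_div]; linarith [hneg j hj hjk]) M
  exact ⟨δ, hδ, h.mono fun x hx hx' => lt_neg.1 (hx hx')⟩

/-- if `d_{k̂} > 1` (and `a_{k̂} d_{k̂}^p < 1`) and all the numbers
`β_{k̂}/(d_{k̂}−1) + β_j`, `j ≠ k̂`, are strictly positive (resp. strictly negative), then
the self-similar function of zero spectral order tends essentially to `+∞` (resp. `−∞`)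
at the singular point `x̂`. -/
theorem selfSimilar_zeroOrder_essTendsTo_pm_infty
    (n : ℕ) (hn : 1 < n) (a d β : ℕ → ℝ)
    (ha : ∀ k ∈ Finset.Icc 1 n, 0 < a k)
    (hsum : ∑ k ∈ Finset.Icc 1 n, a k = 1)
    (p : ℝ≥0∞) (hp1 : 1 ≤ p) (hpt : p ≠ ⊤)
    (khat : ℕ) (hk : khat ∈ Finset.Icc 1 n)
    (hdk : d khat ≠ 0)
    (hd0 : ∀ k ∈ Finset.Icc 1 n, k ≠ khat → d k = 0)
    (hβ : ∃ k ∈ Finset.Icc 1 n, β k ≠ 0)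
    (hcontr : a khat * |d khat| ^ p.toReal < 1)
    (f : ℝ → ℝ) (hf : MemLp f p (volume.restrict (Set.Icc (0:ℝ) 1)))
    (hfix : f =ᵐ[volume.restrict (Set.Icc (0:ℝ) 1)] simOp n a d β f)
    (hdgt : d khat > 1) (hcontr' : a khat * d khat ^ p.toReal < 1)
    (xhat : ℝ) (hxhat : xhat = alphaOf a khat / (1 - a khat)) :
    ((∀ j ∈ Finset.Icc 1 n, j ≠ khat → 0 < β khat / (d khat - 1) + β j) →
      ∀ M > (0:ℝ), ∃ δ > (0:ℝ), ∀ᵐ x ∂(volume.restrict (Set.Icc (0:ℝ) 1)),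
        (0 < |x - xhat| ∧ |x - xhat| < δ) → f x > M) ∧
    ((∀ j ∈ Finset.Icc 1 n, j ≠ khat → β khat / (d khat - 1) + β j < 0) →
      ∀ M > (0:ℝ), ∃ δ > (0:ℝ), ∀ᵐ x ∂(volume.restrict (Set.Icc (0:ℝ) 1)),
        (0 < |x - xhat| ∧ |x - xhat| < δ) → f x < -M) :=
  selfSimilar_zeroOrder_essTendsTo_pm_infty_general n a d β ha hsum p khat hk hd0 f hfix hdgt
    hcontr' xhat hxhat
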